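/- Let (Y,Z) be a dual pair, C, D ⊆ Y weakly closed cones and B₁, B₂ ⊆ Y weakly closed convex sets containing zero. If Z is conormal with respect to the one-sided polars, i.e., B₁° ⊆ (B₂° ∩ C°) + D°, then Y is normal with respect to (C,D,B₁,B₂), i.e., (B₂ + C) ∩ D ⊆ B₁. -/

import Mathlib

open Pointwise

/-- The one-sided polar of a subset `A ⊆ Y` in the dual pair `(Y,Z)` given by `B`. -/
def onesidedPolar {Y Z : Type*} [AddCommGroup Y] [Module ℝ Y] [AddCommGroup Z] [Module ℝ Z]
    (B : Y →ₗ[ℝ] Z →ₗ[ℝ] ℝ) (A : Set Y) : Set Z :=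
  {z : Z | ∀ a ∈ A, B a z ≤ 1}

/-!
Normality is read off from the bipolar theorem. Pairing `y = b + c ∈ D` (with `b ∈ B₂`,
`c ∈ C`) against `z = z₁ + z₂ ∈ B₁°` split by conormality gives
`⟨y, z⟩ = ⟨b, z₁⟩ + ⟨c, z₁⟩ + ⟨y, z₂⟩ ≤ 1 + 0 + 0`, the last two terms being nonpositive because
`C` and `D` are cones. So `y` lies in the one-sided bipolar of `B₁`, which is `B₁` itself by
Hahn–Banach separation in the weak topology.
-/

namespace onesidedPolar

variable {Y Z : Type*} [AddCommGroup Y] [Module ℝ Y] [AddCommGroup Z] [Module ℝ Z]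
  (B : Y →ₗ[ℝ] Z →ₗ[ℝ] ℝ)

lemma antitone : Antitone (onesidedPolar B) :=
  fun _ _ hst _ hz a ha => hz a (hst ha)

lemma apply_nonpos_of_smul_subset {K : Set Y} (hK : ∀ l : ℝ, 0 ≤ l → l • K ⊆ K)
    {w : Y} (hw : w ∈ K) {z : Z} (hz : z ∈ onesidedPolar B K) : B w z ≤ 0 := by
  by_contra! hpos
  have h2w : (2 / B w z) • w ∈ K := hK _ (by positivity) (Set.smul_mem_smul_set hw)
  have := hz _ h2w
  rw [map_smul, LinearMap.smul_apply, smul_eq_mul, div_mul_cancel₀ _ hpos.ne'] at this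
  norm_num at this

lemma bipolar_subset {A : Set Y} (hAcl : IsClosed (X := WeakBilin B) A) (hAconv : Convex ℝ A)
    (hA0 : (0 : Y) ∈ A) : onesidedPolar B.flip (onesidedPolar B A) ⊆ A := by
  intro y hy
  by_contra hyA
  obtain ⟨f, u, hfA, hfy⟩ := geometric_hahn_banach_closed_point (E := WeakBilin B) hAconv hAcl hyA
  have hu : 0 < u := by simpa using hfA 0 hA0
  obtain ⟨z, rfl⟩ := LinearMap.dualEmbedding_surjective B f
  change ∀ a ∈ A, B a z < u at hfA
  change u < B y z at hfy
  have hzA : u⁻¹ • z ∈ onesidedPolar B A := fun a ha => by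
    simpa only [map_smul, smul_eq_mul, inv_mul_le_iff₀ hu, mul_one] using (hfA a ha).le
  have hyz : B y (u⁻¹ • z) ≤ 1 := hy _ hzA
  rw [map_smul, smul_eq_mul, inv_mul_le_iff₀ hu, mul_one] at hyz
  linarith

lemma add_inter_subset_flip_polar {C D B₂ : Set Y} (hC : ∀ l : ℝ, 0 ≤ l → l • C ⊆ C)
    (hD : ∀ l : ℝ, 0 ≤ l → l • D ⊆ D) :
    (B₂ + C) ∩ D ⊆
      onesidedPolar B.flip ((onesidedPolar B B₂ ∩ onesidedPolar B C) + onesidedPolar B D) := by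
  rintro _ ⟨⟨b, hb, c, hc, rfl⟩, hy⟩ _ ⟨z₁, ⟨hz₁B₂, hz₁C⟩, z₂, hz₂, rfl⟩
  have hbz₁ : B b z₁ ≤ 1 := hz₁B₂ b hb
  have hcz₁ : B c z₁ ≤ 0 := apply_nonpos_of_smul_subset B hC hc hz₁C
  have hyz₂ : B (b + c) z₂ ≤ 0 := apply_nonpos_of_smul_subset B hD hy hz₂
  simp only [LinearMap.flip_apply, map_add, LinearMap.add_apply] at hyz₂ ⊢
  linarith

end onesidedPolar

theorem normal_of_conormal_polars
    {Y Z : Type*} [AddCommGroup Y] [Module ℝ Y] [AddCommGroup Z] [Module ℝ Z]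
    (B : Y →ₗ[ℝ] Z →ₗ[ℝ] ℝ)
    (C D B₁ B₂ : Set Y)
    (hCsmul : ∀ l : ℝ, 0 ≤ l → l • C ⊆ C)
    (hDsmul : ∀ l : ℝ, 0 ≤ l → l • D ⊆ D)
    (hB₁cl : IsClosed (X := WeakBilin B) B₁) (hB₁conv : Convex ℝ B₁) (hB₁0 : (0 : Y) ∈ B₁)
    (hconormal : onesidedPolar B B₁ ⊆ (onesidedPolar B B₂ ∩ onesidedPolar B C) + onesidedPolar B D) :
    (B₂ + C) ∩ D ⊆ B₁ :=
  calc (B₂ + C) ∩ D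
      ⊆ onesidedPolar B.flip ((onesidedPolar B B₂ ∩ onesidedPolar B C) + onesidedPolar B D) :=
        onesidedPolar.add_inter_subset_flip_polar B hCsmul hDsmul
    _ ⊆ onesidedPolar B.flip (onesidedPolar B B₁) := onesidedPolar.antitone B.flip hconormal
    _ ⊆ B₁ := onesidedPolar.bipolar_subset B hB₁cl hB₁conv hB₁0
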